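/- arXiv:math/0403331 — 2 statements merged into one kernel-verified Lean document; each statement's English description precedes it below -/
import Mathlib

section
/- In the ring of formal power series in x with coefficients in ℤ[q], the series 𝒫(x) = Σ_{ν=0}^{∞} x^ν (1−x)(1−qx)⋯(1−q^ν x) satisfies the functional equation 𝒫(x) = 1 − qx² − q²x³ · 𝒫(qx), where 𝒫(qx) denotes the power series obtained from 𝒫(x) by rescaling x to qx. -/
/-- The parameter `q`, viewed as a constant of the power series ring `ℤ[q][[x]]`. -/
noncomputable def qc : PowerSeries (Polynomial ℤ) :=
  PowerSeries.C (R := Polynomial ℤ) Polynomial.X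

/-- The sum `∑_{ν=0}^∞ f ν` of a family of power series whose `ν`-th member is
divisible by `x^ν`. -/
noncomputable def seriesSum (f : ℕ → PowerSeries (Polynomial ℤ)) :
    PowerSeries (Polynomial ℤ) :=
  PowerSeries.mk fun d => PowerSeries.coeff (R := Polynomial ℤ) d (∑ ν ∈ Finset.range (d + 1), f ν)

/-- `𝒫(x) = ∑_{ν=0}^∞ x^ν (1-x)(1-qx)⋯(1-q^ν x) ∈ ℤ[q][[x]]`. -/
noncomputable def calP : PowerSeries (Polynomial ℤ) :=
  seriesSum fun ν =>
    PowerSeries.X ^ ν * ∏ i ∈ Finset.range (ν + 1), (1 - qc ^ i * PowerSeries.X)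

/-!
Write `a ν = x^ν (1-x)(1-qx)⋯(1-q^ν x)` for the summands of `𝒫` and
`r ν = x^ν (1-qx)⋯(1-q^ν x) (1-q^{ν+1}x²)`. Then
`a ν + q²x³ a ν(qx) = r ν - r (ν+1)`, so the partial sums telescope:
`∑_{ν<N} a ν = 1 - qx² - q²x³ ∑_{ν<N} a ν(qx) - r N`.
Since `x^N ∣ r N`, letting `N → ∞` in the `x`-adic sense gives the functional equation.
-/

open PowerSeries Finset

section Rescale

variable {R : Type*} [CommSemiring R]

theorem PowerSeries.rescale_C (a r : R) : rescale a (C r) = C r := by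
  ext n
  rw [coeff_rescale, coeff_C]
  split_ifs with h
  · rw [h, pow_zero, one_mul]
  · rw [mul_zero]

theorem PowerSeries.X_pow_dvd_rescale {n : ℕ} {φ : R⟦X⟧} (a : R) (h : X ^ n ∣ φ) :
    X ^ n ∣ rescale a φ := by
  refine X_pow_dvd_iff.mpr fun m hm => ?_
  rw [coeff_rescale, X_pow_dvd_iff.mp h m hm, mul_zero]

end Rescale

section SeriesSum

variable {f : ℕ → PowerSeries (Polynomial ℤ)}

theorem seriesSum_eq_iff (hf : ∀ ν, X ^ ν ∣ f ν) {g : PowerSeries (Polynomial ℤ)} :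
    seriesSum f = g ↔ ∀ N, X ^ N ∣ g - ∑ ν ∈ range N, f ν := by
  constructor
  · rintro rfl N
    refine X_pow_dvd_iff.mpr fun d hd => ?_
    have htail : ∀ ν ∈ range N, ν ∉ range (d + 1) → coeff d (f ν) = 0 := fun ν _ hν =>
      X_pow_dvd_iff.mp (hf ν) d (by simpa using hν)
    rw [map_sub, seriesSum, coeff_mk, map_sum, map_sum,
      sum_subset (range_subset_range.mpr hd) htail, sub_self]
  · intro hg
    ext d
    have hd := X_pow_dvd_iff.mp (hg (d + 1)) d d.lt_succ_self
    rw [map_sub, sub_eq_zero] at hd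
    rw [seriesSum, coeff_mk, hd]

end SeriesSum

namespace CalP

noncomputable def qProd (n : ℕ) : PowerSeries (Polynomial ℤ) :=
  ∏ i ∈ range n, (1 - qc ^ (i + 1) * X)

noncomputable def term (ν : ℕ) : PowerSeries (Polynomial ℤ) :=
  X ^ ν * ∏ i ∈ range (ν + 1), (1 - qc ^ i * X)

theorem calP_eq_seriesSum_term : calP = seriesSum term := rfl

theorem X_pow_dvd_term (ν : ℕ) : X ^ ν ∣ term ν := dvd_mul_right _ _

theorem qProd_succ (n : ℕ) : qProd (n + 1) = qProd n * (1 - qc ^ (n + 1) * X) :=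
  prod_range_succ _ _

theorem term_eq (ν : ℕ) : term ν = X ^ ν * (1 - X) * qProd ν := by
  rw [term, qProd, prod_range_succ', pow_zero, one_mul, mul_assoc, mul_comm (1 - X)]

theorem rescale_qc : rescale Polynomial.X qc = qc := rescale_C _ _

theorem rescale_X_eq_qc_mul_X : rescale Polynomial.X (X : PowerSeries (Polynomial ℤ)) = qc * X :=
  rescale_X _

theorem rescale_one_sub_qc_pow_mul_X (i : ℕ) :
    rescale Polynomial.X (1 - qc ^ i * X) = 1 - qc ^ (i + 1) * X := by
  rw [map_sub, map_one, map_mul, map_pow, rescale_qc, rescale_X_eq_qc_mul_X, pow_succ, mul_assoc]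

theorem rescale_term (ν : ℕ) :
    rescale Polynomial.X (term ν) = qc ^ ν * X ^ ν * qProd (ν + 1) := by
  rw [term, map_mul, map_pow, rescale_X_eq_qc_mul_X, mul_pow, map_prod,
    prod_congr rfl fun i _ => rescale_one_sub_qc_pow_mul_X i, qProd]

noncomputable def remainder (ν : ℕ) : PowerSeries (Polynomial ℤ) :=
  X ^ ν * qProd ν * (1 - qc ^ (ν + 1) * X ^ 2)

theorem term_add_rescale_term (ν : ℕ) :
    term ν + qc ^ 2 * X ^ 3 * rescale Polynomial.X (term ν) = remainder ν - remainder (ν + 1) := by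
  rw [rescale_term, term_eq, remainder, remainder, qProd_succ]
  ring

theorem sum_range_term_add_rescale (N : ℕ) :
    ∑ ν ∈ range N, term ν + qc ^ 2 * X ^ 3 * rescale Polynomial.X (∑ ν ∈ range N, term ν)
      = 1 - qc * X ^ 2 - remainder N := by
  rw [map_sum, mul_sum, ← sum_add_distrib, sum_congr rfl fun ν _ => term_add_rescale_term ν,
    sum_range_sub']
  simp [remainder, qProd]

end CalP

open CalP in
/-- The functional equation `𝒫(x) = 1 - qx² - q²x³ 𝒫(qx)` in `ℤ[q][[x]]`, where `𝒫(qx)`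
is obtained from `𝒫(x)` by rescaling `x` to `qx`. -/
theorem calP_functional_equation :
    calP = 1 - qc * PowerSeries.X ^ 2
      - qc ^ 2 * PowerSeries.X ^ 3 * PowerSeries.rescale Polynomial.X calP := by
  rw [calP_eq_seriesSum_term]
  have hpartial := (seriesSum_eq_iff X_pow_dvd_term (g := seriesSum term)).mp rfl
  rw [seriesSum_eq_iff X_pow_dvd_term]
  intro N
  have hdiff : 1 - qc * X ^ 2 - qc ^ 2 * X ^ 3 * rescale Polynomial.X (seriesSum term)
        - ∑ ν ∈ range N, term ν
      = remainder N
        - qc ^ 2 * X ^ 3 * rescale Polynomial.X (seriesSum term - ∑ ν ∈ range N, term ν) := by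
    rw [map_sub]
    linear_combination -(sum_range_term_add_rescale N)
  exact hdiff ▸ dvd_sub ((dvd_mul_right _ _).mul_right _)
    (dvd_mul_of_dvd_right (X_pow_dvd_rescale _ (hpartial N)) _)
end

section
/- In the ring of formal power series in x with coefficients in ℤ[q], the identity Σ_{ν=0}^{∞} x^ν (1−x)(1−qx)⋯(1−q^ν x) = 1 + Σ_{ℓ=1}^{∞} (−1)^ℓ ( q^{ℓ(3ℓ−1)/2} x^{3ℓ−1} + q^{ℓ(3ℓ+1)/2} x^{3ℓ} ) holds. -/
open Finset PowerSeries

section CommRing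

variable {S : Type*} [CommRing S]

theorem eq_sum_prod_mul_add_prod_mul_of_forall_eq_add_mul {t a b : ℕ → S}
    (h : ∀ k, t k = a k + b k * t (k + 1)) (M : ℕ) :
    t 0 = ∑ m ∈ range M, (∏ k ∈ range m, b k) * a m + (∏ k ∈ range M, b k) * t M := by
  induction M with
  | zero => simp
  | succ M ih => rw [ih, h M, sum_range_succ, prod_range_succ]; ring

/-- `(a; q)ₙ` -/
def qPochhammer (q a : S) (n : ℕ) : S :=
  ∏ i ∈ range n, (1 - q ^ i * a)

theorem qPochhammer_succ (q a : S) (n : ℕ) :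
    qPochhammer q a (n + 1) = qPochhammer q a n * (1 - q ^ n * a) :=
  prod_range_succ _ n

theorem qPochhammer_succ' (q a : S) (n : ℕ) :
    qPochhammer q a (n + 1) = (1 - a) * qPochhammer q (q * a) n := by
  simp only [qPochhammer, prod_range_succ', pow_zero, one_mul, pow_succ, mul_assoc]
  exact mul_comm _ _

theorem sum_pow_mul_qPochhammer_eq (q a : S) (M : ℕ) :
    ∑ n ∈ range (M + 2), a ^ n * qPochhammer q a (n + 1) =
      1 - q * a ^ 2
        - q ^ 2 * a ^ 3 * ∑ n ∈ range M, (q * a) ^ n * qPochhammer q (q * a) (n + 1)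
        - a ^ (M + 2) * qPochhammer q (q * a) (M + 1) := by
  induction M with
  | zero =>
    simp only [sum_range_succ, sum_range_zero, qPochhammer, prod_range_succ, prod_range_zero]
    ring
  | succ M ih =>
    rw [sum_range_succ, ih, sum_range_succ, qPochhammer_succ' q a (M + 2),
      qPochhammer_succ q (q * a) (M + 1)]
    ring

theorem mul_three_add_one_div_two_succ (m : ℕ) :
    (m + 1) * (3 * (m + 1) + 1) / 2 = m * (3 * m + 1) / 2 + (3 * m + 2) := by
  rw [← Nat.add_mul_div_left _ _ two_pos]
  ring_nf

theorem mul_three_sub_one_div_two_succ (m : ℕ) :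
    (m + 1) * (3 * (m + 1) - 1) / 2 = m * (3 * m + 1) / 2 + (2 * m + 1) := by
  rw [← Nat.add_mul_div_left _ _ two_pos, show 3 * (m + 1) - 1 = 3 * m + 2 by omega]
  ring_nf

theorem prod_range_neg_sq_mul_pow_mul_pow_three (q x : S) (m : ℕ) :
    ∏ k ∈ range m, -(q ^ 2 * (q ^ k * x) ^ 3) =
      (-1) ^ m * q ^ (m * (3 * m + 1) / 2) * x ^ (3 * m) := by
  induction m with
  | zero => simp
  | succ m ih => rw [prod_range_succ, ih, mul_three_add_one_div_two_succ]; ring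

theorem pentagonal_pair_eq_prod_mul (q x : S) (m : ℕ) :
    (-1) ^ (m + 1) * (q ^ ((m + 1) * (3 * (m + 1) - 1) / 2) * x ^ (3 * (m + 1) - 1)
        + q ^ ((m + 1) * (3 * (m + 1) + 1) / 2) * x ^ (3 * (m + 1))) =
      (∏ k ∈ range m, -(q ^ 2 * (q ^ k * x) ^ 3)) *
        -(q * (q ^ m * x) ^ 2 + q ^ 2 * (q ^ m * x) ^ 3) := by
  rw [prod_range_neg_sq_mul_pow_mul_pow_three, mul_three_sub_one_div_two_succ,
    mul_three_add_one_div_two_succ, show 3 * (m + 1) - 1 = 3 * m + 2 by omega]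
  ring

end CommRing

theorem PowerSeries.eq_of_forall_X_pow_dvd_sub {R : Type*} [CommRing R] {f g : R⟦X⟧}
    (h : ∀ N, X ^ N ∣ f - g) : f = g := by
  refine sub_eq_zero.mp (ext fun d => ?_)
  simpa using X_pow_dvd_iff.mp (h (d + 1)) d d.lt_succ_self

theorem X_pow_dvd_seriesSum_sub_sum {f : ℕ → (Polynomial ℤ)⟦X⟧} (hf : ∀ ν, X ^ ν ∣ f ν)
    (N : ℕ) : X ^ N ∣ seriesSum f - ∑ ν ∈ range N, f ν := by
  refine X_pow_dvd_iff.mpr fun d hd => ?_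
  rw [map_sub, seriesSum, coeff_mk, sub_eq_zero, map_sum, map_sum]
  refine sum_subset (range_subset_range.mpr (by omega)) fun ν _ hν => ?_
  exact X_pow_dvd_iff.mp (hf ν) d (by simp at hν; omega)

/-- `F(a) = ∑ₙ aⁿ (a;q)ₙ₊₁`, meaningful only when `x ∣ a`. -/
noncomputable def pochhammerSeries (q a : (Polynomial ℤ)⟦X⟧) : (Polynomial ℤ)⟦X⟧ :=
  seriesSum fun n => a ^ n * qPochhammer q a (n + 1)

theorem X_pow_dvd_pochhammerSeries_sub_sum {q a : (Polynomial ℤ)⟦X⟧} (ha : X ∣ a)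
    (N : ℕ) : X ^ N ∣ pochhammerSeries q a - ∑ n ∈ range N, a ^ n * qPochhammer q a (n + 1) :=
  X_pow_dvd_seriesSum_sub_sum (fun n => (pow_dvd_pow_of_dvd ha n).mul_right _) N

theorem pochhammerSeries_eq {q a : (Polynomial ℤ)⟦X⟧} (ha : X ∣ a) :
    pochhammerSeries q a = 1 - q * a ^ 2 - q ^ 2 * a ^ 3 * pochhammerSeries q (q * a) := by
  refine eq_of_forall_X_pow_dvd_sub fun N => ?_
  have hF := (pow_dvd_pow X (N.le_add_right 2)).trans
    (X_pow_dvd_pochhammerSeries_sub_sum (q := q) ha (N + 2))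
  have hF' := X_pow_dvd_pochhammerSeries_sub_sum (q := q) (ha.mul_left q) N
  have hbdry : X ^ N ∣ a ^ (N + 2) * qPochhammer q (q * a) (N + 1) :=
    ((pow_dvd_pow X (by omega)).trans (pow_dvd_pow_of_dvd ha _)).mul_right _
  rw [sum_pow_mul_qPochhammer_eq] at hF
  convert dvd_sub (dvd_add hF (hF'.mul_left (q ^ 2 * a ^ 3))) hbdry using 1
  ring

/-- `∑_{ν=0}^∞ x^ν (1-x)(1-qx)⋯(1-q^ν x)
      = 1 + ∑_{ℓ=1}^∞ (-1)^ℓ (q^{ℓ(3ℓ-1)/2} x^{3ℓ-1} + q^{ℓ(3ℓ+1)/2} x^{3ℓ})`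
in `ℤ[q][[x]]`; the sum over `ℓ ≥ 1` is realized by summing over `ℓ = m + 1`, `m ≥ 0`. -/
theorem calP_pentagonal_expansion :
    seriesSum (fun ν =>
        PowerSeries.X ^ ν * ∏ i ∈ Finset.range (ν + 1), (1 - qc ^ i * PowerSeries.X)) =
      1 + seriesSum (fun m =>
        (-1) ^ (m + 1) *
          (qc ^ ((m + 1) * (3 * (m + 1) - 1) / 2) * PowerSeries.X ^ (3 * (m + 1) - 1)
            + qc ^ ((m + 1) * (3 * (m + 1) + 1) / 2) * PowerSeries.X ^ (3 * (m + 1)))) := by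
  set t : ℕ → (Polynomial ℤ)⟦X⟧ := fun k => pochhammerSeries qc (qc ^ k * X) - 1
  set a : ℕ → (Polynomial ℤ)⟦X⟧ :=
    fun k => -(qc * (qc ^ k * X) ^ 2 + qc ^ 2 * (qc ^ k * X) ^ 3)
  set b : ℕ → (Polynomial ℤ)⟦X⟧ := fun k => -(qc ^ 2 * (qc ^ k * X) ^ 3)
  have hrec (k : ℕ) : t k = a k + b k * t (k + 1) := by
    have h := pochhammerSeries_eq (q := qc) (dvd_mul_left X (qc ^ k))
    rw [← mul_assoc, ← pow_succ'] at h
    simp only [t, a, b]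
    rw [h]
    ring
  have hprod (N : ℕ) : X ^ N ∣ ∏ k ∈ range N, b k := by
    rw [prod_range_neg_sq_mul_pow_mul_pow_three]
    exact (pow_dvd_pow X (by omega)).mul_left _
  have hLHS : pochhammerSeries qc X = t 0 + 1 := by simp [t]
  simp only [pentagonal_pair_eq_prod_mul]
  refine eq_of_forall_X_pow_dvd_sub fun N => ?_
  have htail := X_pow_dvd_seriesSum_sub_sum (fun m => (hprod m).mul_right (a m)) N
  change X ^ N ∣ pochhammerSeries qc X - _
  rw [hLHS, eq_sum_prod_mul_add_prod_mul_of_forall_eq_add_mul hrec N]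
  convert dvd_sub ((hprod N).mul_right (t N)) htail using 1
  ring
end
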